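/- Let D be a connected rooted digraph to which reduction rules R1–R4 do not apply, let S be the set of lonely cut-edges of D, and let S' ⊆ S. Let D_1 be the rooted digraph obtained from D by contracting all edges of S'. Then D_1 contains no new cut-edge: every cut-edge of D_1 is the image under the contraction of a cut-edge of D. -/

import Mathlib

/-
Inside a bag of the contraction the contracted edges form a chain `u₁ → u₂ → ⋯ → uₖ`:
a lonely cut-edge is the only contracted edge leaving its tail, and two cut-edges with
the same head have the same tail. As every cut-edge `(u, v)` makes `u` a dominator of `v`,
of any two vertices of a bag one dominates the other.

Let `(a, b)` be a cut-edge of the contraction, so that `b` is unreachable once `(a, b)`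
is deleted. Then every edge entering the bag `b` from a vertex reached outside that bag
starts in the bag `a`. Let `p₀ → y₀` be the edge by which a walk from `r` first enters the
bag `b`. If deleting it left `y₀` reachable, a walk would first enter the bag `b` at some
`s` from some `p` in the bag `a` with `(p, s) ≠ (p₀, y₀)`. If `s ≠ y₀`, neither of `s`, `y₀`
dominates the other. If `s = y₀`, one of the two in-neighbours `p`, `p₀` of `y₀` dominates
the other, whereas R4 at `y₀` reaches each of them avoiding the other in-neighbours of `y₀`.
-/

namespace OutBranching

variable {V : Type}

/-! ### Basic digraph notions -/

/-- `b` is reachable from `a` by a directed path. -/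
def Reaches (E : V → V → Prop) (a b : V) : Prop := Relation.ReflTransGen E a b

/-- The rooted digraph `(E, r)` is connected: every vertex is reachable from the root. -/
def Connected (E : V → V → Prop) (r : V) : Prop := ∀ v, Reaches E r v

/-- `b` is reachable from `a` by a directed path avoiding the vertex set `S`. -/
def ReachAvoid (E : V → V → Prop) (S : Set V) (a b : V) : Prop :=
  a ∉ S ∧ b ∉ S ∧ Relation.ReflTransGen (fun x y => E x y ∧ x ∉ S ∧ y ∉ S) a b

/-- A cut-vertex: a vertex `v ≠ r` whose removal makes some (other) vertex unreachable
from the root `r`. -/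
def IsCutVertex (E : V → V → Prop) (r v : V) : Prop :=
  v ≠ r ∧ ∃ u, u ≠ v ∧ ¬ ReachAvoid E {v} r u

/-- The set of cut-vertices. -/
def cutVertices (E : V → V → Prop) (r : V) : Set V := {v | IsCutVertex E r v}

/-- The edge relation obtained by deleting the single edge `(u,v)`. -/
def delEdge (E : V → V → Prop) (u v : V) : V → V → Prop :=
  fun a b => E a b ∧ ¬ (a = u ∧ b = v)

/-- A cut-edge: an edge `(u,v)` whose deletion makes some vertex unreachable from `r`. -/
def IsCutEdge (E : V → V → Prop) (r u v : V) : Prop :=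
  E u v ∧ ∃ w, ¬ Reaches (delEdge E u v) r w

/-- A lonely cut-edge: no other cut-edge has the same tail. -/
def IsLonelyCutEdge (E : V → V → Prop) (r u v : V) : Prop :=
  IsCutEdge E r u v ∧ ∀ w, IsCutEdge E r u w → w = v

/-- A branching cut-edge: some other cut-edge has the same tail. -/
def IsBranchingCutEdge (E : V → V → Prop) (r u v : V) : Prop :=
  IsCutEdge E r u v ∧ ∃ w, w ≠ v ∧ IsCutEdge E r u w

/-- In-neighbourhood. -/
def inN (E : V → V → Prop) (v : V) : Set V := {u | E u v}

/-- Out-neighbourhood. -/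
def outN (E : V → V → Prop) (v : V) : Set V := {w | E v w}

/-- Private neighbors of `u`: out-neighbors of `u` not reachable from `r` in `D - u`. -/
def privateNbrs (E : V → V → Prop) (r u : V) : Set V :=
  {v | E u v ∧ ¬ ReachAvoid E {u} r v}

/-- A special vertex: in-degree at least 3, or an incoming simple edge. -/
def Special (E : V → V → Prop) (v : V) : Prop :=
  3 ≤ (inN E v).ncard ∨ ∃ u, E u v ∧ ¬ E v u

/-- The set of special vertices. -/
def sp (E : V → V → Prop) : Set V := {v | Special E v}

/-! ### Outbranchings and `maxleaf` -/

/-- `T` is an outbranching of `(E, r)`: a spanning subdigraph in which every vertex is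
reachable from `r`, every vertex other than `r` has in-degree exactly 1,
and `r` has in-degree 0. -/
structure IsOutbranching (E : V → V → Prop) (r : V) (T : V → V → Prop) : Prop where
  sub : ∀ ⦃a b⦄, T a b → E a b
  reach : ∀ v, Reaches T r v
  indeg : ∀ v, v ≠ r → ∃! u, T u v
  rootIndeg : ∀ u, ¬ T u r

/-- The number of leaves (vertices of out-degree 0) of `T`. -/
noncomputable def leafCount (T : V → V → Prop) : ℕ := {v | ∀ w, ¬ T v w}.ncard

/-- The maximum number of leaves over all outbranchings of `(E, r)`. -/
noncomputable def maxleaf (E : V → V → Prop) (r : V) : ℕ :=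
  sSup {n | ∃ T, IsOutbranching E r T ∧ leafCount T = n}

/-! ### The reduction rules (each `RuleᵢNA` says that rule i does NOT apply) -/

/-- Rule 1 does not apply: every vertex is reachable from the root. -/
def Rule1NA (E : V → V → Prop) (r : V) : Prop := Connected E r

/-- Rule 2 does not apply: no cut-vertex has exactly one incoming edge,
and no cut-vertex has exactly one outgoing edge. -/
def Rule2NA (E : V → V → Prop) (r : V) : Prop :=
  ∀ v, IsCutVertex E r v → ¬ (∃! u, E u v) ∧ ¬ (∃! w, E v w)

/-- Rule 3 does not apply: there is no proper bipath of length 4, i.e. no sequence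
of 5 distinct vertices `a b c d e` whose three internal vertices have their in- and
out-neighbourhoods equal to the pair of adjacent vertices on the sequence. -/
def Rule3NA (E : V → V → Prop) : Prop :=
  ¬ ∃ a b c d e : V, List.Pairwise (· ≠ ·) [a, b, c, d, e] ∧
    (∀ w, (E w b ↔ w = a ∨ w = c) ∧ (E b w ↔ w = a ∨ w = c)) ∧
    (∀ w, (E w c ↔ w = b ∨ w = d) ∧ (E c w ↔ w = b ∨ w = d)) ∧
    (∀ w, (E w d ↔ w = c ∨ w = e) ∧ (E d w ↔ w = c ∨ w = e))

/-- Rule 4 does not apply: there is no vertex `x` with an in-neighbor `y` such that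
removing all in-neighbors of `x` other than `y` disconnects `y` from `r`. -/
def Rule4NA (E : V → V → Prop) (r : V) : Prop :=
  ¬ ∃ x y, E y x ∧ ¬ ReachAvoid E {v | E v x ∧ v ≠ y} r y

/-- Rule 5 does not apply: there are no two cut-edges `(x₁,y₁)`, `(x₂,y₂)` with both
`(x₁,x₂)` and `(x₂,x₁)` being edges. -/
def Rule5NA (E : V → V → Prop) (r : V) : Prop :=
  ¬ ∃ x₁ y₁ x₂ y₂, IsCutEdge E r x₁ y₁ ∧ IsCutEdge E r x₂ y₂ ∧ E x₁ x₂ ∧ E x₂ x₁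

/-- Rule 6 does not apply: there is no cut-edge `(u,v)` with `(v,u)` an edge. -/
def Rule6NA (E : V → V → Prop) (r : V) : Prop :=
  ¬ ∃ u v, IsCutEdge E r u v ∧ E v u

/-- Reduction rules R1–R4 do not apply. -/
def Reduced4 (E : V → V → Prop) (r : V) : Prop :=
  Rule1NA E r ∧ Rule2NA E r ∧ Rule3NA E ∧ Rule4NA E r

/-- Reduction rules R1–R6 do not apply. -/
def Reduced6 (E : V → V → Prop) (r : V) : Prop :=
  Reduced4 E r ∧ Rule5NA E r ∧ Rule6NA E r

/-! ### Contraction -/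

/-- The setoid on `V` generated by identifying the endpoints of the edges in `C`. -/
def contractSetoid (C : V → V → Prop) : Setoid V := Relation.EqvGen.setoid C

/-- Vertices of the digraph obtained by contracting all edges in `C`. -/
def CVert (C : V → V → Prop) : Type := Quotient (contractSetoid C)

/-- The projection of a vertex to the contracted digraph. -/
def cmk (C : V → V → Prop) (x : V) : CVert C := Quotient.mk (contractSetoid C) x

/-- The edge relation of the digraph obtained from `E` by contracting all edges in `C`
(loops and parallel edges are discarded). -/
def contractE (E : V → V → Prop) (C : V → V → Prop) : CVert C → CVert C → Prop :=
  fun a b => a ≠ b ∧ ∃ x y, cmk C x = a ∧ cmk C y = b ∧ E x y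

/-- The relation consisting of a single edge `(u,v)` (used for contracting one edge). -/
def singleEdge (u v : V) : V → V → Prop := fun a b => a = u ∧ b = v

/-- The relation of lonely cut-edges. -/
def lonelyRel (E : V → V → Prop) (r : V) : V → V → Prop :=
  fun u v => IsLonelyCutEdge E r u v

/-- Vertices of the contracted graph `D_c`, obtained by contracting all lonely cut-edges. -/
def ContractedVert (E : V → V → Prop) (r : V) : Type := CVert (lonelyRel E r)

/-- The edge relation of the contracted graph `D_c`. -/
def contractedE (E : V → V → Prop) (r : V) : ContractedVert E r → ContractedVert E r → Prop :=
  contractE E (lonelyRel E r)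

/-- The root of the contracted graph `D_c`. -/
def contractedRoot (E : V → V → Prop) (r : V) : ContractedVert E r := cmk (lonelyRel E r) r

/-- The bag of a vertex of `D_c`: the set of original vertices contracted into it. -/
def bag (E : V → V → Prop) (r : V) (a : ContractedVert E r) : Set V :=
  {x | cmk (lonelyRel E r) x = a}

/-- `t` is a tail of the bag `B`: it is the tail of a contracted (lonely) cut-edge inside `B`,
or `B` is the singleton `{t}`. -/
def IsTailOf (E : V → V → Prop) (r : V) (B : Set V) (t : V) : Prop :=
  t ∈ B ∧ (B = {t} ∨ ∃ h ∈ B, IsLonelyCutEdge E r t h)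

/-- `h` is a head of the bag `B`: it is the head of a contracted (lonely) cut-edge inside `B`,
or `B` is the singleton `{h}`. -/
def IsHeadOf (E : V → V → Prop) (r : V) (B : Set V) (h : V) : Prop :=
  h ∈ B ∧ (B = {h} ∨ ∃ t ∈ B, IsLonelyCutEdge E r t h)

/-- Two bags are linked if there is an edge of `D` in each direction between them. -/
def LinkedBags (E : V → V → Prop) (A B : Set V) : Prop :=
  (∃ x ∈ A, ∃ y ∈ B, E x y) ∧ (∃ x ∈ B, ∃ y ∈ A, E x y)

/-! ### Duplication of a vertex -/

/-- Duplicating the vertex `v`: the new vertex is `none`, receiving/sending edges exactly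
as `v` does. -/
def dupE (E : V → V → Prop) (v : V) : Option V → Option V → Prop
  | some a, some b => E a b
  | some a, none => E a v
  | none, some b => E v b
  | none, none => False

/-! ### Undirected notions: underlying graph, minors -/

/-- The underlying undirected simple graph of a digraph. -/
def underlying (E : V → V → Prop) : SimpleGraph V where
  Adj a b := a ≠ b ∧ (E a b ∨ E b a)
  symm := ⟨fun a b h => ⟨Ne.symm h.1, h.2.symm⟩⟩
  loopless := ⟨fun a h => h.1 rfl⟩

/-- `H` is a minor of `G`: there is a minor model of `H` in `G`. -/
def IsMinorOf {W U : Type} (H : SimpleGraph W) (G : SimpleGraph U) : Prop :=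
  ∃ I : W → Set U,
    (∀ u, (G.induce (I u)).Connected) ∧
    (Pairwise fun u v => Disjoint (I u) (I v)) ∧
    (∀ u v, H.Adj u v → ∃ x ∈ I u, ∃ y ∈ I v, G.Adj x y)

/-- `G` is `H`-minor-free. -/
def MinorFree {W U : Type} (H : SimpleGraph W) (G : SimpleGraph U) : Prop := ¬ IsMinorOf H G

/-! ### Weak bipaths -/

/-- A weak bipath in a digraph: a sequence of at least 3 distinct vertices whose internal
vertices have in-neighbourhood exactly the two adjacent vertices of the sequence, both
of which are also out-neighbours. -/
structure WeakBipath {W : Type} (E : W → W → Prop) where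
  len : ℕ
  u : Fin (len + 3) → W
  inj : Function.Injective u
  cond : ∀ i j k : Fin (len + 3), j.val + 1 = i.val → i.val + 1 = k.val →
    (∀ w, E w (u i) ↔ (w = u j ∨ w = u k)) ∧ E (u i) (u j) ∧ E (u i) (u k)

/-- The set of internal vertices of a weak bipath. -/
def WeakBipath.internal {W : Type} {E : W → W → Prop} (P : WeakBipath E) : Set W :=
  {w | ∃ i : Fin (P.len + 3), 0 < i.val ∧ i.val < P.len + 2 ∧ P.u i = w}

/-- The first extremity of a weak bipath. -/
def WeakBipath.first {W : Type} {E : W → W → Prop} (P : WeakBipath E) : W := P.u 0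

/-- The last extremity of a weak bipath. -/
def WeakBipath.last {W : Type} {E : W → W → Prop} (P : WeakBipath E) : W :=
  P.u (Fin.last (P.len + 2))

section Reachability

variable {E Q : V → V → Prop} {S : Set V} {r a b p s t u v u₁ u₂ c x y m : V}

theorem ReachAvoid.mono {T : Set V} (hQ : ∀ x y, Q x y → E x y) (hST : S ⊆ T)
    (h : ReachAvoid Q T a b) : ReachAvoid E S a b :=
  ⟨fun ha => h.1 (hST ha), fun hb => h.2.1 (hST hb),
    Relation.ReflTransGen.mono (fun _ _ hxy =>
      ⟨hQ _ _ hxy.1, fun hx => hxy.2.1 (hST hx), fun hy => hxy.2.2 (hST hy)⟩) _ _ h.2.2⟩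

theorem ReachAvoid.tail (h : ReachAvoid E S a p) (hE : E p s) (hs : s ∉ S) :
    ReachAvoid E S a s :=
  ⟨h.1, hs, h.2.2.tail ⟨hE, h.2.1, hs⟩⟩

theorem ReachAvoid.reaches_delEdge (h : ReachAvoid E S a b) (huv : u ∈ S ∨ v ∈ S) :
    Reaches (delEdge E u v) a b :=
  Relation.ReflTransGen.mono (fun _ _ hxy => ⟨hxy.1, fun ⟨hx, hy⟩ =>
    huv.elim (fun hu => hxy.2.1 (hx ▸ hu)) (fun hv => hxy.2.2 (hy ▸ hv))⟩) _ _ h.2.2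

theorem reachAvoid_or_exists_entry (h : Reaches Q a b) (ha : a ∉ S) :
    ReachAvoid Q S a b ∨ ∃ p s, s ∈ S ∧ ReachAvoid Q S a p ∧ Q p s := by
  induction h with
  | refl => exact Or.inl ⟨ha, ha, .refl⟩
  | @tail p s _ hps ih =>
    refine ih.elim (fun hp => ?_) Or.inr
    by_cases hs : s ∈ S
    · exact Or.inr ⟨p, s, hs, hp, hps⟩
    · exact Or.inl (hp.tail hps hs)

theorem IsCutEdge.not_reaches_head (hconn : Connected E r) (h : IsCutEdge E r u v) :
    ¬ Reaches (delEdge E u v) r v := by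
  intro hv
  obtain ⟨_, w, hw⟩ := h
  suffices ∀ z, Reaches E r z → Reaches (delEdge E u v) r z from hw (this w (hconn w))
  intro z hz
  induction hz with
  | refl => exact .refl
  | @tail x y _ hxy ih =>
    by_cases he : x = u ∧ y = v
    · exact he.2 ▸ hv
    · exact ih.tail ⟨hxy, he⟩

theorem IsCutEdge.tail_unique (hconn : Connected E r) (h₁ : IsCutEdge E r u₁ v)
    (h₂ : IsCutEdge E r u₂ v) : u₁ = u₂ := by
  have hrv : r ∉ ({v} : Set V) := fun hr => h₁.not_reaches_head hconn (hr ▸ .refl)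
  obtain ⟨p, s, hs, hp, hps⟩ := (reachAvoid_or_exists_entry (hconn v) hrv).resolve_left
    fun h => h.2.1 rfl
  rw [Set.mem_singleton_iff] at hs
  subst hs
  have last_edge : ∀ u, IsCutEdge E r u s → p = u := fun u hu => by
    by_contra hpu
    exact hu.not_reaches_head hconn
      (Relation.ReflTransGen.tail (hp.reaches_delEdge (Or.inr rfl)) ⟨hps, fun h => hpu h.1⟩)
  exact (last_edge u₁ h₁).symm.trans (last_edge u₂ h₂)

def Dominates (E : V → V → Prop) (r t x : V) : Prop := ¬ ReachAvoid E {t} r x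

theorem Dominates.refl : Dominates E r t t := fun h => h.2.1 rfl

theorem Dominates.trans (htc : Dominates E r t c) (hcx : Dominates E r c x) :
    Dominates E r t x := by
  rintro ⟨hr, hx, hwalk⟩
  by_cases hrc : r = c
  · subst hrc
    exact htc ⟨hr, hr, .refl⟩
  obtain hx' | ⟨p, s, hs, hp, hps⟩ := reachAvoid_or_exists_entry hwalk (S := {c}) hrc
  · exact hcx (hx'.mono (fun _ _ h => h.1) subset_rfl)
  · rw [Set.mem_singleton_iff] at hs
    subst hs
    exact htc ⟨hr, hps.2.2, (Relation.ReflTransGen.mono (fun _ _ h => h.1) _ _ hp.2.2).tail hps⟩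

theorem IsCutEdge.dominates (hconn : Connected E r) (h : IsCutEdge E r u v) :
    Dominates E r u v :=
  fun hv => h.not_reaches_head hconn (hv.reaches_delEdge (Or.inl rfl))

theorem not_dominates_of_entry (hQ : ∀ x y, Q x y → E x y) (hp : ReachAvoid Q S r p)
    (hps : Q p s) (ht : t ∈ S) (hts : t ≠ s) : ¬ Dominates E r t s :=
  fun h => h ((hp.mono hQ (Set.singleton_subset_iff.2 ht)).tail (hQ _ _ hps) hts.symm)

theorem Rule4NA.eq_of_dominates (hR4 : Rule4NA E r) (ht : E t y) (hm : E m y)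
    (h : Dominates E r t m) : t = m := by
  by_contra hne
  have hm' : ReachAvoid E {v | E v y ∧ v ≠ m} r m :=
    by_contra fun hm' => hR4 ⟨y, m, hm, hm'⟩
  have ht' : t ∈ {v | E v y ∧ v ≠ m} := ⟨ht, hne⟩
  exact h (hm'.mono (fun _ _ => id) (Set.singleton_subset_iff.2 ht'))

end Reachability

section Contraction

variable {E Q C : V → V → Prop} {r t x y m : V}

theorem reflTransGen_or_of_eqvGen (hr : Relator.RightUnique C) (hl : Relator.LeftUnique C)
    (h : Relation.EqvGen C x y) :
    Relation.ReflTransGen C x y ∨ Relation.ReflTransGen C y x := by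
  induction h with
  | rel _ _ h => exact Or.inl (.single h)
  | refl => exact Or.inl .refl
  | symm _ _ _ ih => exact ih.symm
  | trans _ _ _ _ _ ih₁ ih₂ =>
    rcases ih₁ with h₁ | h₁ <;> rcases ih₂ with h₂ | h₂
    · exact Or.inl (h₁.trans h₂)
    · exact (Relation.ReflTransGen.total_of_right_unique (r := Function.swap C)
        (fun _ _ _ hb hc => hl hb hc) (Relation.reflTransGen_swap.2 h₁)
        (Relation.reflTransGen_swap.2 h₂)).symm.imp
        Relation.reflTransGen_swap.1 Relation.reflTransGen_swap.1
    · exact Relation.ReflTransGen.total_of_right_unique hr h₁ h₂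
    · exact Or.inr (h₂.trans h₁)

theorem dominates_of_reflTransGen (hconn : Connected E r)
    (hC : ∀ u v, C u v → IsCutEdge E r u v) (h : Relation.ReflTransGen C t x) :
    Dominates E r t x := by
  induction h with
  | refl => exact .refl
  | tail _ hcx ih => exact ih.trans ((hC _ _ hcx).dominates hconn)

theorem dominates_or_dominates_of_cmk_eq (hconn : Connected E r)
    (hC : ∀ u v, C u v → IsLonelyCutEdge E r u v) (h : cmk C x = cmk C y) :
    Dominates E r x y ∨ Dominates E r y x := by
  have hcut : ∀ u v, C u v → IsCutEdge E r u v := fun u v huv => (hC u v huv).1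
  have hr : Relator.RightUnique C := fun u v w huv huw =>
    ((hC u v huv).2 w (hcut u w huw)).symm
  have hl : Relator.LeftUnique C := fun u w v huv hwv =>
    (hcut u v huv).tail_unique hconn (hcut w v hwv)
  exact (reflTransGen_or_of_eqvGen hr hl (Quotient.exact h)).imp
    (dominates_of_reflTransGen hconn hcut) (dominates_of_reflTransGen hconn hcut)

theorem Rule4NA.eq_of_adj_of_cmk_eq (hR4 : Rule4NA E r) (hconn : Connected E r)
    (hC : ∀ u v, C u v → IsLonelyCutEdge E r u v) (ht : E t y) (hm : E m y)
    (h : cmk C t = cmk C m) : t = m :=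
  (dominates_or_dominates_of_cmk_eq hconn hC h).elim (hR4.eq_of_dominates ht hm)
    fun h' => (hR4.eq_of_dominates hm ht h').symm

theorem reaches_cmk {R : CVert C → CVert C → Prop}
    (hQ : ∀ p q, Q p q → cmk C p ≠ cmk C q → R (cmk C p) (cmk C q))
    (h : Reaches Q x y) : Reaches R (cmk C x) (cmk C y) :=
  Relation.ReflTransGen.lift' (cmk C) (fun p q hpq => by
    by_cases hne : cmk C p = cmk C q
    · show Relation.ReflTransGen R (cmk C p) (cmk C q)
      rw [hne]
    · exact .single (hQ p q hpq hne)) _ _ h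

theorem Connected.contractE (hconn : Connected E r) : Connected (contractE E C) (cmk C r) :=
  Quotient.ind fun z => reaches_cmk (fun p q hpq hne => ⟨hne, p, q, rfl, rfl, hpq⟩) (hconn z)

theorem cmk_eq_of_entry {a b : CVert C} {p s : V}
    (hb : ¬ Reaches (delEdge (contractE E C) a b) (cmk C r) b) (hQ : ∀ x y, Q x y → E x y)
    (hp : ReachAvoid Q {y | cmk C y = b} r p) (hps : E p s) (hs : cmk C s = b) :
    cmk C p = a := by
  by_contra hpa
  have hp' : Reaches (delEdge (contractE E C) a b) (cmk C r) (cmk C p) :=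
    reaches_cmk (fun x y hxy hne =>
      ⟨⟨hne, x, y, rfl, rfl, hQ _ _ hxy.1⟩, fun h => hxy.2.2 h.2⟩) hp.2.2
  exact hb (Relation.ReflTransGen.tail hp' ⟨⟨hp.2.1, p, s, rfl, hs, hps⟩, fun h => hpa h.1⟩)

end Contraction

theorem contract_lonely_no_new_cut_edges_general {V : Type} (E : V → V → Prop) (r : V)
    (hred : Reduced4 E r)
    (C : V → V → Prop) (hC : ∀ u v, C u v → IsLonelyCutEdge E r u v) :
    ∀ a b : CVert C, IsCutEdge (contractE E C) (cmk C r) a b →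
      ∃ x y, IsCutEdge E r x y ∧ cmk C x = a ∧ cmk C y = b := by
  obtain ⟨hconn, -, -, hR4⟩ := hred
  intro a b hab
  have hb := hab.not_reaches_head hconn.contractE
  have hrB : r ∉ {y | cmk C y = b} := fun h => hb (h ▸ .refl)
  obtain ⟨w, hw⟩ := Quotient.exists_rep b
  obtain ⟨p₀, y₀, hy₀, hp₀, hE₀⟩ :=
    (reachAvoid_or_exists_entry (hconn w) hrB).resolve_left fun h => h.2.1 hw
  have hp₀a := cmk_eq_of_entry hb (fun _ _ => id) hp₀ hE₀ hy₀
  refine ⟨p₀, y₀, ⟨hE₀, y₀, fun hy => ?_⟩, hp₀a, hy₀⟩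
  obtain ⟨p, s, hs, hp, hps⟩ :=
    (reachAvoid_or_exists_entry hy hrB).resolve_left fun h => h.2.1 hy₀
  have hpa := cmk_eq_of_entry hb (fun _ _ h => h.1) hp hps.1 hs
  by_cases hsy : s = y₀
  · exact hps.2
      ⟨hR4.eq_of_adj_of_cmk_eq hconn hC (hsy ▸ hps.1) hE₀ (hpa.trans hp₀a.symm), hsy⟩
  · exact (dominates_or_dominates_of_cmk_eq hconn hC (hs.trans hy₀.symm)).elim
      (not_dominates_of_entry (fun _ _ => id) hp₀ hE₀ hs hsy)
      (not_dominates_of_entry (fun _ _ h => h.1) hp hps hy₀ (Ne.symm hsy))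

/-- If reduction rules R1–R4 do not apply to the connected rooted digraph
`D` and `D₁` is obtained from `D` by contracting a subset `C` of the lonely cut-edges,
then every cut-edge of `D₁` is the image under the contraction of a cut-edge of `D`. -/
theorem contract_lonely_no_new_cut_edges {V : Type} [Fintype V] (E : V → V → Prop) (r : V)
    (hroot : ∀ u, ¬ E u r) (hred : Reduced4 E r)
    (C : V → V → Prop) (hC : ∀ u v, C u v → IsLonelyCutEdge E r u v) :
    ∀ a b : CVert C, IsCutEdge (contractE E C) (cmk C r) a b →
      ∃ x y, IsCutEdge E r x y ∧ cmk C x = a ∧ cmk C y = b :=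
  contract_lonely_no_new_cut_edges_general E r hred C hC

end OutBranching
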